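/- Let λ ∈ ℚ^n be dominant and regular and let w ∈ S_n. Then there exists exactly one subset I ⊆ Φ⁺ such that w·λ + ∑_{α∈I} α = wλ. (This is Lemma 3(ii): counting P as a multiset indexed by subsets of Φ⁺, there is a unique element x of P with w·λ + x = wλ.) -/

import Mathlib

open Finset

/-- The positive root `ε_i − ε_j` (for `i < j`) of `gl_n`, as a vector in `ℚ^n`. -/
def posRoot {n : ℕ} (i j : Fin n) : Fin n → ℚ :=
  fun k => (if k = i then 1 else 0) - (if k = j then 1 else 0)

/-- The set `Φ⁺ = { ε_i − ε_j : i < j }` of positive roots of `gl_n`. -/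
def PosRoots (n : ℕ) : Finset (Fin n → ℚ) :=
  ((Finset.univ : Finset (Fin n × Fin n)).filter (fun p => p.1 < p.2)).image
    (fun p => posRoot p.1 p.2)

/-- The action of `S_n` on weights by permuting coordinates: `(wλ)_i = λ_{w⁻¹ i}`. -/
def wAct {n : ℕ} (w : Equiv.Perm (Fin n)) (v : Fin n → ℚ) : Fin n → ℚ :=
  fun i => v (w⁻¹ i)

/-- `ρ = (1/2) ∑_{α ∈ Φ⁺} α`. -/
def rho (n : ℕ) : Fin n → ℚ := (1 / 2 : ℚ) • ∑ α ∈ PosRoots n, α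

/-- The dot action `w·λ = w(λ+ρ) − ρ`. -/
def dotAct {n : ℕ} (w : Equiv.Perm (Fin n)) (lam : Fin n → ℚ) : Fin n → ℚ :=
  wAct w (lam + rho n) - rho n

/-- A weight is integral if all of its coordinates are integers. -/
def Integral {n : ℕ} (lam : Fin n → ℚ) : Prop := ∀ i, ∃ m : ℤ, lam i = (m : ℚ)

/-- A weight is dominant if it is integral and `λ_i − λ_{i+1} ≥ 0` for all consecutive `i`. -/
def Dominant {n : ℕ} (lam : Fin n → ℚ) : Prop :=
  Integral lam ∧ ∀ i j : Fin n, (i : ℕ) + 1 = (j : ℕ) → 0 ≤ lam i - lam j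

/-- A weight is regular if `λ_i − λ_j` is a nonzero integer for all `i ≠ j`. -/
def Regular {n : ℕ} (lam : Fin n → ℚ) : Prop :=
  ∀ i j : Fin n, i ≠ j → ∃ m : ℤ, m ≠ 0 ∧ lam i - lam j = (m : ℚ)

/-! The equation `w·λ + x = wλ` says exactly `x = ρ − wρ`. This vector is the sum of the inversion
set `N = {α ∈ Φ⁺ | ⟨α, wρ⟩ < 0}`, which is a coordinatewise count of the inversions of `w⁻¹`.
For uniqueness pair with `wρ`: the functional `α ↦ ⟨α, wρ⟩` vanishes on no root, so `N` is the
unique subset of `Φ⁺` minimising `∑_{α ∈ I} ⟨α, wρ⟩`, and any `I` with the same sum as `N`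
attains the same value. -/

namespace Finset

variable {ι M : Type*} [DecidableEq ι] [AddCommGroup M] [PartialOrder M] [IsOrderedAddMonoid M]

theorem eq_of_sum_eq_of_pos_of_neg {s t : Finset ι} {f : ι → M}
    (hpos : ∀ i ∈ s \ t, 0 < f i) (hneg : ∀ i ∈ t \ s, f i < 0)
    (h : ∑ i ∈ s, f i = ∑ i ∈ t, f i) : s = t := by
  have hsum : ∑ i ∈ s \ t, f i = ∑ i ∈ t \ s, f i :=
    sub_eq_zero.1 (by rw [sum_sdiff_sub_sum_sdiff, h, sub_self])
  have hst : s \ t = ∅ := by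
    by_contra hne
    exact (sum_pos hpos (nonempty_iff_ne_empty.2 hne)).not_ge
      (hsum ▸ sum_nonpos fun i hi => (hneg i hi).le)
  have hts : t \ s = ∅ := by
    by_contra hne
    exact (sum_neg hneg (nonempty_iff_ne_empty.2 hne)).not_ge
      (hsum ▸ sum_nonneg fun i hi => (hpos i hi).le)
  exact Subset.antisymm (sdiff_eq_empty_iff_subset.1 hst) (sdiff_eq_empty_iff_subset.1 hts)

end Finset

open Finset

theorem Equiv.Perm.card_right_inversions_add_val {n : ℕ} (e : Equiv.Perm (Fin n)) (k : Fin n) :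
    #{j | k < j ∧ e j < e k} + k = #{i | i < k ∧ e k < e i} + e k := by
  -- both sides equal `#{j | e j < e k} + #{i | i < k ∧ e k < e i}`
  have hbelow : #{j | e j < e k} = e k := by
    rw [← Fin.card_Iio (e k)]
    exact card_bijective e e.bijective fun j => by simp
  have hleft : #{i | i < k} = k := by rw [filter_gt_eq_Iio, Fin.card_Iio]
  have hsplit_below := card_filter_add_card_filter_not (s := {j | e j < e k}) (· < k)
  have hsplit_left := card_filter_add_card_filter_not (s := {i | i < k}) (e · < e k)
  rw [filter_filter, filter_filter] at hsplit_below hsplit_left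
  have hbelow_right :
      univ.filter (fun j => e j < e k ∧ ¬ j < k) = univ.filter (fun j => k < j ∧ e j < e k) := by
    ext j; simp only [mem_filter, mem_univ, true_and]
    grind
  have hleft_above :
      univ.filter (fun i => i < k ∧ ¬ e i < e k) = univ.filter (fun i => i < k ∧ e k < e i) := by
    ext i; simp only [mem_filter, mem_univ, true_and]
    have := e.injective.eq_iff (a := i) (b := k)
    grind
  have hbelow_left :
      univ.filter (fun j => e j < e k ∧ j < k) = univ.filter (fun i => i < k ∧ e i < e k) := by
    simp only [and_comm]
  rw [hbelow_right, hbelow_left] at hsplit_below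
  rw [hleft_above] at hsplit_left
  omega

section Roots

variable {n : ℕ}

theorem posRoot_injOn : Set.InjOn (fun p : Fin n × Fin n => posRoot p.1 p.2) {p | p.1 < p.2} := by
  rintro ⟨i, j⟩ (hij : i < j) ⟨i', j'⟩ - h
  have hi := congrFun h i
  have hj := congrFun h j
  simp only [posRoot] at hi hj
  grind

theorem sum_image_posRoot {S : Finset (Fin n × Fin n)} (hS : ∀ p ∈ S, p.1 < p.2) :
    ∑ α ∈ S.image (fun p => posRoot p.1 p.2), α = ∑ p ∈ S, posRoot p.1 p.2 :=
  sum_image fun p hp q hq => posRoot_injOn (hS p hp) (hS q hq)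

theorem sum_posRoot_filter_apply (r : Fin n → Fin n → Prop) [DecidableRel r] (k : Fin n) :
    (∑ p ∈ univ.filter (fun p : Fin n × Fin n => r p.1 p.2), posRoot p.1 p.2) k
      = (#{j | r k j} : ℚ) - #{i | r i k} := by
  have hcoord : ∀ i j : Fin n, (if r i j then posRoot i j k else 0)
      = (if k = i then (if r k j then 1 else 0) else 0)
        - (if k = j then (if r i k then 1 else 0) else 0) := by
    intro i j
    unfold posRoot
    split_ifs <;> simp_all
  rw [Finset.sum_apply, sum_filter, Fintype.sum_prod_type]
  simp only [hcoord, sum_sub_distrib, sum_ite_irrel, sum_const_zero, sum_ite_eq, mem_univ, if_true,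
    sum_boole]

theorem posRoot_dotProduct (i j : Fin n) (v : Fin n → ℚ) : posRoot i j ⬝ᵥ v = v i - v j := by
  simp [posRoot, dotProduct, sub_mul, sum_sub_distrib]

theorem rho_apply (k : Fin n) : rho n k = ((n : ℚ) - 1 - 2 * k) / 2 := by
  have hk := k.isLt
  rw [rho, PosRoots, sum_image_posRoot fun p hp => (mem_filter.1 hp).2, Pi.smul_apply,
    sum_posRoot_filter_apply (· < ·), filter_lt_eq_Ioi, filter_gt_eq_Iio, Fin.card_Ioi,
    Fin.card_Iio, Nat.cast_sub (by omega), Nat.cast_sub (by omega)]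
  push_cast
  ring

theorem rho_sub_rho (i j : Fin n) : rho n i - rho n j = (j : ℚ) - i := by
  rw [rho_apply, rho_apply]
  ring

theorem posRoot_dotProduct_wAct_rho (w : Equiv.Perm (Fin n)) (i j : Fin n) :
    posRoot i j ⬝ᵥ wAct w (rho n) = ((w⁻¹ j : Fin n) : ℚ) - (w⁻¹ i : Fin n) := by
  rw [posRoot_dotProduct]
  exact rho_sub_rho _ _

theorem dotProduct_wAct_rho_ne_zero (w : Equiv.Perm (Fin n)) {α : Fin n → ℚ}
    (hα : α ∈ PosRoots n) : α ⬝ᵥ wAct w (rho n) ≠ 0 := by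
  obtain ⟨i, j, hij, rfl⟩ := by simpa [PosRoots] using hα
  rw [posRoot_dotProduct_wAct_rho, sub_ne_zero, Ne, Nat.cast_inj, Fin.val_inj]
  exact w⁻¹.injective.ne (ne_of_lt hij).symm

theorem wAct_sub_dotAct (w : Equiv.Perm (Fin n)) (lam : Fin n → ℚ) :
    wAct w lam - dotAct w lam = rho n - wAct w (rho n) := by
  funext i
  simp only [dotAct, wAct, Pi.sub_apply, Pi.add_apply]
  ring

def inversionRoots (w : Equiv.Perm (Fin n)) : Finset (Fin n → ℚ) :=
  (PosRoots n).filter fun α => α ⬝ᵥ wAct w (rho n) < 0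

theorem inversionRoots_eq_image (w : Equiv.Perm (Fin n)) :
    inversionRoots w = (univ.filter fun p : Fin n × Fin n => p.1 < p.2 ∧ w⁻¹ p.2 < w⁻¹ p.1).image
      fun p => posRoot p.1 p.2 := by
  simp only [inversionRoots, PosRoots, filter_image, filter_filter, posRoot_dotProduct_wAct_rho,
    sub_neg, Nat.cast_lt, Fin.val_fin_lt]

theorem sum_inversionRoots (w : Equiv.Perm (Fin n)) :
    ∑ α ∈ inversionRoots w, α = rho n - wAct w (rho n) := by
  rw [inversionRoots_eq_image, sum_image_posRoot fun p hp => (mem_filter.1 hp).2.1]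
  funext k
  rw [sum_posRoot_filter_apply (fun i j => i < j ∧ w⁻¹ j < w⁻¹ i), Pi.sub_apply, wAct, rho_sub_rho]
  have hcount := congrArg (Nat.cast : ℕ → ℚ) (w⁻¹.card_right_inversions_add_val k)
  push_cast at hcount
  linarith

theorem eq_inversionRoots_of_sum_eq (w : Equiv.Perm (Fin n)) {I : Finset (Fin n → ℚ)}
    (hI : I ⊆ PosRoots n) (h : ∑ α ∈ I, α = ∑ α ∈ inversionRoots w, α) : I = inversionRoots w := by
  refine eq_of_sum_eq_of_pos_of_neg (f := (· ⬝ᵥ wAct w (rho n))) (fun α hα => ?_)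
    (fun α hα => (mem_filter.1 (mem_sdiff.1 hα).1).2) ?_
  · obtain ⟨hαI, hαN⟩ := mem_sdiff.1 hα
    exact (not_lt.1 fun hneg => hαN (mem_filter.2 ⟨hI hαI, hneg⟩)).lt_of_ne'
      (dotProduct_wAct_rho_ne_zero w (hI hαI))
  · simp only [← sum_dotProduct, h]

end Roots

theorem lemma3_ii_general {n : ℕ} (lam : Fin n → ℚ) (w : Equiv.Perm (Fin n)) :
    ∃! I : Finset (Fin n → ℚ),
      I ⊆ PosRoots n ∧ dotAct w lam + ∑ α ∈ I, α = wAct w lam := by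
  simp_rw [← eq_sub_iff_add_eq', wAct_sub_dotAct]
  exact ⟨inversionRoots w, ⟨filter_subset _ _, sum_inversionRoots w⟩, fun I ⟨hI, hsum⟩ =>
    eq_inversionRoots_of_sum_eq w hI (hsum.trans (sum_inversionRoots w).symm)⟩

/-- Lemma 3(ii): for dominant regular `lam` and `w` in `S_n`, there is exactly one
subset `I` of the positive roots with `w·lam + (sum of I) = w lam`. -/
theorem lemma3_ii {n : ℕ} (hn : 1 ≤ n) (lam : Fin n → ℚ)
    (hdom : Dominant lam) (hreg : Regular lam) (w : Equiv.Perm (Fin n)) :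
    ∃! I : Finset (Fin n → ℚ),
      I ⊆ PosRoots n ∧ dotAct w lam + ∑ α ∈ I, α = wAct w lam :=
  lemma3_ii_general lam w
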